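/- For any function f on datasets with global ℓ₂-sensitivity Δ (i.e., ‖f(D) − f(D')‖₂ ≤ Δ for all neighboring D, D'), and any σ > 0 and α > 1, the Rényi divergence of order α between N(f(D), σ²Δ² I) and N(f(D'), σ²Δ² I) is at most α / (2σ²). -/

import Mathlib

open MeasureTheory Real

/-- Rényi divergence of order `α` between densities `p, q`:
`D_α(p‖q) = (1/(α−1)) log ∫ p(x)^α q(x)^{1−α} dx`. -/
noncomputable def renyiDivFun {Ω : Type*} [MeasureSpace Ω] (α : ℝ) (p q : Ω → ℝ) : ℝ :=
  (α - 1)⁻¹ * Real.log (∫ x, p x ^ α * q x ^ (1 - α))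

/-- The density of the isotropic Gaussian `N(μ, σ²I)` on `ℝ^d`. -/
noncomputable def gaussPDF (d : ℕ) (μ : EuclideanSpace ℝ (Fin d)) (σ : ℝ)
    (x : EuclideanSpace ℝ (Fin d)) : ℝ :=
  (2 * π * σ ^ 2) ^ (-(d : ℝ) / 2) * Real.exp (-‖x - μ‖ ^ 2 / (2 * σ ^ 2))

/-!
Completing the square, `α‖x - μ‖² + (1 - α)‖x - ν‖² = ‖x - m‖² + α(1 - α)‖μ - ν‖²` with
`m = αμ + (1 - α)ν`, so `p_μ^α p_ν^(1-α) = p_m · exp (α(α - 1)‖μ - ν‖² / (2s²))` for Gaussian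
densities of common scale `s`. As `p_m` integrates to `1`, `D_α(p_μ‖p_ν) = α‖μ - ν‖² / (2s²)`,
which for `s = σΔ` and `‖μ - ν‖ ≤ Δ` is at most `α / (2σ²)`.
-/

lemma mul_norm_sub_sq_add_mul_norm_sub_sq {E : Type*} [NormedAddCommGroup E]
    [InnerProductSpace ℝ E] (μ ν x : E) (α : ℝ) :
    α * ‖x - μ‖ ^ 2 + (1 - α) * ‖x - ν‖ ^ 2
      = ‖x - (α • μ + (1 - α) • ν)‖ ^ 2 + α * (1 - α) * ‖μ - ν‖ ^ 2 := by
  simp only [← real_inner_self_eq_norm_sq, inner_sub_left, inner_sub_right,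
    inner_add_left, inner_add_right, real_inner_smul_left, real_inner_smul_right,
    real_inner_comm x μ, real_inner_comm x ν, real_inner_comm ν μ]
  ring

lemma volume_univ_euclideanSpace_fin_zero :
    volume (Set.univ : Set (EuclideanSpace ℝ (Fin 0))) = 1 := by
  rw [← (EuclideanSpace.basisFun (Fin 0) ℝ).volume_parallelepiped]
  congr
  ext x
  simp [parallelepiped, Subsingleton.elim x 0]

section gaussPDF

variable {d : ℕ}

lemma integral_gaussPDF (μ : EuclideanSpace ℝ (Fin d)) {s : ℝ} (hs : s ≠ 0) :
    ∫ x, gaussPDF d μ s x = 1 := by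
  have hb : 0 < (2 * s ^ 2)⁻¹ := by positivity
  simp only [gaussPDF, neg_div, div_eq_inv_mul (‖_‖ ^ 2), ← neg_mul]
  rw [integral_const_mul, integral_sub_right_eq_self (fun x => rexp (-(2 * s ^ 2)⁻¹ * ‖x‖ ^ 2)),
    GaussianFourier.integral_rexp_neg_mul_sq_norm hb, finrank_euclideanSpace_fin, div_inv_eq_mul,
    show π * (2 * s ^ 2) = 2 * π * s ^ 2 by ring, ← Real.rpow_add (by positivity),
    neg_add_cancel, Real.rpow_zero]

lemma integral_gaussPDF_zero (μ : EuclideanSpace ℝ (Fin d)) :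
    ∫ x, gaussPDF d μ 0 x = if d = 0 then 1 else 0 := by
  rcases Nat.eq_zero_or_pos d with rfl | hd
  · simp [gaussPDF, measureReal_def, volume_univ_euclideanSpace_fin_zero]
  · simp [gaussPDF, hd.ne', Real.zero_rpow]

lemma gaussPDF_rpow_mul_gaussPDF_rpow (μ ν x : EuclideanSpace ℝ (Fin d)) (s α : ℝ) :
    gaussPDF d μ s x ^ α * gaussPDF d ν s x ^ (1 - α)
      = gaussPDF d (α • μ + (1 - α) • ν) s x * rexp (α * (α - 1) * ‖μ - ν‖ ^ 2 / (2 * s ^ 2)) := by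
  unfold gaussPDF
  set C := (2 * π * s ^ 2) ^ (-(d : ℝ) / 2)
  have hC : C ^ α * C ^ (1 - α) = C := by
    rw [← Real.rpow_add' (by positivity) (by simp), add_sub_cancel, Real.rpow_one]
  have hexponent : -‖x - μ‖ ^ 2 / (2 * s ^ 2) * α + -‖x - ν‖ ^ 2 / (2 * s ^ 2) * (1 - α)
      = -‖x - (α • μ + (1 - α) • ν)‖ ^ 2 / (2 * s ^ 2)
        + α * (α - 1) * ‖μ - ν‖ ^ 2 / (2 * s ^ 2) := by
    linear_combination (-1 / (2 * s ^ 2)) * mul_norm_sub_sq_add_mul_norm_sub_sq μ ν x α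
  rw [Real.mul_rpow (by positivity) (Real.exp_nonneg _),
    Real.mul_rpow (by positivity) (Real.exp_nonneg _), ← Real.exp_mul, ← Real.exp_mul]
  calc _ = (C ^ α * C ^ (1 - α)) * rexp (-‖x - μ‖ ^ 2 / (2 * s ^ 2) * α
        + -‖x - ν‖ ^ 2 / (2 * s ^ 2) * (1 - α)) := by rw [Real.exp_add]; ring
    _ = _ := by rw [hC, hexponent, Real.exp_add]; ring

/-- At `s = 0` both sides are junk `0`: the right by division by zero, the left because
`gaussPDF d μ 0` is the constant `0 ^ (-d / 2)` (`0` if `d > 0`, `1` if `d = 0`). -/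
lemma renyiDivFun_gaussPDF (μ ν : EuclideanSpace ℝ (Fin d)) (s : ℝ) {α : ℝ} (hα : α ≠ 1) :
    renyiDivFun α (gaussPDF d μ s) (gaussPDF d ν s) = α * ‖μ - ν‖ ^ 2 / (2 * s ^ 2) := by
  simp only [renyiDivFun, gaussPDF_rpow_mul_gaussPDF_rpow, integral_mul_const]
  rcases eq_or_ne s 0 with rfl | hs
  · rw [integral_gaussPDF_zero]; split_ifs <;> simp
  · rw [integral_gaussPDF _ hs, one_mul, Real.log_exp]
    field_simp [sub_ne_zero.mpr hα]

end gaussPDF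

theorem gaussian_mechanism_rdp_general {Dataset : Type*} (Neighbor : Dataset → Dataset → Prop)
    (d : ℕ) (f : Dataset → EuclideanSpace ℝ (Fin d)) (Δ σ α : ℝ)
    (hα : 1 < α)
    (hsens : ∀ D D', Neighbor D D' → ‖f D - f D'‖ ≤ Δ) :
    ∀ D D', Neighbor D D' →
      renyiDivFun α (gaussPDF d (f D) (σ * Δ)) (gaussPDF d (f D') (σ * Δ)) ≤
        α / (2 * σ ^ 2) := by
  intro D D' hDD'
  have hdist := hsens D D' hDD'
  rw [renyiDivFun_gaussPDF _ _ _ hα.ne']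
  calc α * ‖f D - f D'‖ ^ 2 / (2 * (σ * Δ) ^ 2)
      ≤ α * Δ ^ 2 / (2 * (σ * Δ) ^ 2) := by gcongr
    _ = α / (2 * σ ^ 2) * (Δ ^ 2 / Δ ^ 2) := by ring
    _ ≤ α / (2 * σ ^ 2) := mul_le_of_le_one_right (by positivity) (div_self_le_one _)

/-- RDP guarantee of the Gaussian mechanism: if `f` has global ℓ₂-sensitivity
`Δ` (over a neighboring relation on datasets), then for any `σ > 0` and
`α > 1`, the Rényi divergence of order `α` between `N(f(D), σ²Δ²I)` and
`N(f(D'), σ²Δ²I)` is at most `α/(2σ²)` for all neighboring `D, D'`. -/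
theorem gaussian_mechanism_rdp {Dataset : Type*} (Neighbor : Dataset → Dataset → Prop)
    (d : ℕ) (f : Dataset → EuclideanSpace ℝ (Fin d)) (Δ σ α : ℝ)
    (hΔ : 0 ≤ Δ) (hσ : 0 < σ) (hα : 1 < α)
    (hsens : ∀ D D', Neighbor D D' → ‖f D - f D'‖ ≤ Δ) :
    ∀ D D', Neighbor D D' →
      renyiDivFun α (gaussPDF d (f D) (σ * Δ)) (gaussPDF d (f D') (σ * Δ)) ≤
        α / (2 * σ ^ 2) :=
  gaussian_mechanism_rdp_general Neighbor d f Δ σ α hα hsens
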